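/- For every i ∈ {1, …, 2n} \ {2, 4}: (1) for every p ≥ 1, (R^p·ω)(e_1, e_3, …, e_1, e_3, e_i, e_3), with p leading pairs (e_1, e_3) followed by e_i, e_3, equals 0; (2) for every p ≥ 0, (R^{2p+1}·ω)(e_1, e_3, …, e_1, e_3, e_i, e_4), with 2p+1 leading pairs (e_1, e_3) followed by e_i, e_4, equals (−1)^{p+1} η^{p+1} ε^p (α ω(e_i, e_1) + ω(e_i, e_2)). -/

import Mathlib

/-!
Let `R` be the endomorphism `Z ↦ R(e₁, e₃)Z`. It annihilates `e₁`, `e₃` and `e_i`, so when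
the derivation sum defining `R^{p+1}·ω` is evaluated on `(e₁, e₃, …, e₁, e₃, e_i, v)`, every
term but the last has a zero argument. Hence `(R^p·ω)(e₁, e₃, …, e_i, v) = (-1)^p ω(e_i, R^p v)`.
Now `R e₃ = 0`, `R e₄ = η S e₁`, and `R` maps `S e₁ ↦ -ε S e₃ ↦ -εη S e₁`, so
`R^{2p+1} e₄ = η (-εη)^p S e₁`.
-/

noncomputable section

/-- Gauss-equation curvature `R(X,Y)Z = h(Y,Z)·S(X) − h(X,Z)·S(Y)`. -/
def RR {V : Type*} [AddCommGroup V] [Module ℝ V]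
    (h : V →ₗ[ℝ] V →ₗ[ℝ] ℝ) (S : V →ₗ[ℝ] V) (X Y Z : V) : V :=
  h Y Z • S X - h X Z • S Y

/-- One application of the curvature action on an `m`-linear form (encoded as a
function on lists of vectors): `(R·T)(X,Y,Z₁,…,Zₘ) = −∑ᵢ T(Z₁,…,R(X,Y)Zᵢ,…,Zₘ)`;
the two newest (leftmost) arguments are consumed. -/
def RAct {V : Type*} [AddCommGroup V] [Module ℝ V]
    (h : V →ₗ[ℝ] V →ₗ[ℝ] ℝ) (S : V →ₗ[ℝ] V) (T : List V → ℝ) : List V → ℝ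
  | X :: Y :: Zs =>
      -∑ i ∈ Finset.range Zs.length, T (Zs.set i (RR h S X Y (Zs.getD i 0)))
  | _ => 0

/-- `R^p · ω`, as a function on lists of vectors (of length `2p+2`):
`R⁰·ω = ω` and `R^p·ω = R·(R^{p−1}·ω)`. -/
def Rpow {V : Type*} [AddCommGroup V] [Module ℝ V]
    (h : V →ₗ[ℝ] V →ₗ[ℝ] ℝ) (S : V →ₗ[ℝ] V) (ω : V →ₗ[ℝ] V →ₗ[ℝ] ℝ) (p : ℕ) :
    List V → ℝ :=
  (RAct h S)^[p] (fun l => ω (l.getD 0 0) (l.getD 1 0))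

/-- The list `X, Y, X, Y, …` with `p` pairs `(X, Y)`. -/
def pairList {V : Type*} (X Y : V) : ℕ → List V
  | 0 => []
  | p + 1 => X :: Y :: pairList X Y p

/-- The list `f 1, y, f 2, y, …, f p, y`. -/
def interleave {V : Type*} (f : ℕ → V) (y : V) : ℕ → List V
  | 0 => []
  | p + 1 => interleave f y p ++ [f (p + 1), y]

lemma pairList_length {V : Type*} (X Y : V) (p : ℕ) : (pairList X Y p).length = 2 * p := by
  induction p with
  | zero => rfl
  | succ p ih =>
    rw [pairList, List.length_cons, List.length_cons, ih]
    ring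

lemma mem_pairList {V : Type*} {X Y z : V} {p : ℕ} (hz : z ∈ pairList X Y p) : z = X ∨ z = Y := by
  induction p with
  | zero => simp [pairList] at hz
  | succ p ih =>
    simp only [pairList, List.mem_cons] at hz
    tauto

section Curvature

variable {V : Type*} [AddCommGroup V] [Module ℝ V]
  (h : V →ₗ[ℝ] V →ₗ[ℝ] ℝ) (S : V →ₗ[ℝ] V) (ω : V →ₗ[ℝ] V →ₗ[ℝ] ℝ)

def curvEnd (X Y : V) : Module.End ℝ V :=
  (h Y).smulRight (S X) - (h X).smulRight (S Y)

@[simp]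
lemma curvEnd_apply (X Y Z : V) : curvEnd h S X Y Z = RR h S X Y Z := rfl

lemma RAct_cons (T : List V → ℝ) (X Y : V) (Zs : List V) :
    RAct h S T (X :: Y :: Zs) =
      -∑ i ∈ Finset.range Zs.length, T (Zs.set i (RR h S X Y (Zs.getD i 0))) := rfl

lemma Rpow_zero_apply (l : List V) : Rpow h S ω 0 l = ω (l.getD 0 0) (l.getD 1 0) := rfl

lemma Rpow_succ_apply (p : ℕ) (l : List V) :
    Rpow h S ω (p + 1) l = RAct h S (Rpow h S ω p) l := by
  unfold Rpow
  exact congrFun (Function.iterate_succ_apply' _ _ _) l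

lemma Rpow_eq_zero_of_zero_mem (p : ℕ) (l : List V) (hl : l.length = 2 * p + 2)
    (h0 : (0 : V) ∈ l) : Rpow h S ω p l = 0 := by
  induction p generalizing l with
  | zero =>
    match l, hl with
    | [X, Y], _ =>
      rcases List.mem_pair.mp h0 with rfl | rfl <;> simp [Rpow_zero_apply]
  | succ p ih =>
    match l, hl with
    | X :: Y :: Zs, hl =>
      have hZs : Zs.length = 2 * p + 2 := by simp at hl; omega
      rw [Rpow_succ_apply, RAct_cons, neg_eq_zero]
      refine Finset.sum_eq_zero fun j hj => ih _ (by simp [hZs]) ?_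
      have hj : j < Zs.length := Finset.mem_range.mp hj
      rw [List.getD_eq_getElem _ _ hj]
      rcases List.mem_cons.mp h0 with rfl | h0
      · simpa [RR] using List.mem_set hj 0
      rcases List.mem_cons.mp h0 with rfl | h0
      · simpa [RR] using List.mem_set hj 0
      obtain ⟨k, hk, hk0⟩ := List.mem_iff_getElem.mp h0
      by_cases hjk : j = k
      · subst hjk
        simpa [hk0, RR] using List.mem_set hj 0
      · rw [← hk0, ← List.getElem_set_ne hjk (by simpa using hk)]
        exact List.getElem_mem _

lemma Rpow_succ_cons_append (p : ℕ) (X Y v : V) (Zs : List V) (hZs : Zs.length = 2 * p + 1)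
    (hker : ∀ z ∈ Zs, RR h S X Y z = 0) :
    Rpow h S ω (p + 1) (X :: Y :: (Zs ++ [v])) = -Rpow h S ω p (Zs ++ [RR h S X Y v]) := by
  rw [Rpow_succ_apply, RAct_cons, List.length_append, List.length_singleton,
    Finset.sum_range_succ, Finset.sum_eq_zero, zero_add]
  · rw [List.getD_append_right _ _ _ _ le_rfl, List.set_append]
    simp
  · intro j hj
    have hj : j < Zs.length := Finset.mem_range.mp hj
    rw [List.getD_append _ _ _ _ hj, List.getD_eq_getElem _ _ hj, hker _ (List.getElem_mem hj)]
    exact Rpow_eq_zero_of_zero_mem h S ω p _ (by simp [hZs])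
      (List.mem_set (by simp; omega) 0)

lemma Rpow_pairList_append (X Y t : V) (hX : RR h S X Y X = 0) (hY : RR h S X Y Y = 0)
    (ht : RR h S X Y t = 0) (p : ℕ) (v : V) :
    Rpow h S ω p (pairList X Y p ++ [t, v]) = (-1) ^ p * ω t ((curvEnd h S X Y ^ p) v) := by
  induction p generalizing v with
  | zero => simp [Rpow_zero_apply, pairList]
  | succ p ih =>
    have hker : ∀ z ∈ pairList X Y p ++ [t], RR h S X Y z = 0 := by
      intro z hz
      rcases List.mem_append.mp hz with hz | hz
      · rcases mem_pairList hz with rfl | rfl <;> assumption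
      · rw [List.mem_singleton.mp hz, ht]
    have hstep := Rpow_succ_cons_append h S ω p X Y v _ (by simp [pairList_length]) hker
    simp only [List.append_assoc, List.cons_append, List.nil_append] at hstep
    rw [pairList, List.cons_append, List.cons_append, hstep, ih, pow_succ, pow_succ,
      Module.End.mul_apply, curvEnd_apply]
    ring

end Curvature

lemma Module.End.pow_two_mul_apply_of_swap {R M : Type*} [CommSemiring R] [AddCommMonoid M]
    [Module R M] (f : Module.End R M) {x y : M} {a b : R} (hx : f x = a • y) (hy : f y = b • x)
    (p : ℕ) : (f ^ (2 * p)) x = (a * b) ^ p • x := by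
  have hsq : (f ^ 2) x = (a * b) • x := by
    rw [sq, Module.End.mul_apply, hx, map_smul, hy, smul_smul]
  rw [pow_mul]
  induction p with
  | zero => simp
  | succ p ih => rw [pow_succ', Module.End.mul_apply, ih, map_smul, hsq, smul_smul, pow_succ]

theorem stmt15_general
    {V : Type*} [AddCommGroup V] [Module ℝ V]
    (n : ℕ) (hn : 2 ≤ n) (e : ℕ → V)
    (h ω : V →ₗ[ℝ] V →ₗ[ℝ] ℝ)
    (S : V →ₗ[ℝ] V)
    (α β ε η : ℝ)
    (hS1 : S (e 1) = α • e 1 + e 2)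
    (hS3 : S (e 3) = β • e 3 + e 4)
    (hh12 : h (e 1) (e 2) = ε)
    (hh34 : h (e 3) (e 4) = η)
    (hh0 : ∀ i j, 1 ≤ i → i ≤ 2 * n → 1 ≤ j → j ≤ 2 * n → min i j ≤ 4 →
      ¬((i = 1 ∧ j = 2) ∨ (i = 2 ∧ j = 1) ∨ (i = 3 ∧ j = 4) ∨ (i = 4 ∧ j = 3)) →
      h (e i) (e j) = 0)
    (i : ℕ) (hi1 : 1 ≤ i) (hi : i ≤ 2 * n) (hi2 : i ≠ 2) (hi4 : i ≠ 4) :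
    (∀ p : ℕ, 1 ≤ p →
      Rpow h S ω p (pairList (e 1) (e 3) p ++ [e i, e 3]) = 0) ∧
    (∀ p : ℕ,
      Rpow h S ω (2 * p + 1) (pairList (e 1) (e 3) (2 * p + 1) ++ [e i, e 4]) =
        (-1) ^ (p + 1) * η ^ (p + 1) * ε ^ p * (α * ω (e i) (e 1) + ω (e i) (e 2))) := by
  have hker : ∀ k, 1 ≤ k → k ≤ 2 * n → k ≠ 2 → k ≠ 4 → RR h S (e 1) (e 3) (e k) = 0 := by
    intro k hk1 hk hk2 hk4
    rw [RR, hh0 3 k (by omega) (by omega) hk1 hk (by omega) (by omega),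
      hh0 1 k (by omega) (by omega) hk1 hk (by omega) (by omega), zero_smul, zero_smul, sub_zero]
  have hR1 := hker 1 le_rfl (by omega) (by omega) (by omega)
  have hR3 := hker 3 (by omega) (by omega) (by omega) (by omega)
  have hform := Rpow_pairList_append h S ω (e 1) (e 3) (e i) hR1 hR3 (hker i hi1 hi hi2 hi4)
  set R := curvEnd h S (e 1) (e 3)
  have hRS1 : R (S (e 1)) = (-ε) • S (e 3) := by
    rw [hS1, map_add, map_smul, curvEnd_apply, hR1, smul_zero, zero_add, curvEnd_apply, RR,
      hh0 3 2 (by omega) (by omega) (by omega) (by omega) (by omega) (by omega), hh12]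
    module
  have hR4 : R (e 4) = η • S (e 1) := by
    rw [curvEnd_apply, RR, hh34,
      hh0 1 4 (by omega) (by omega) (by omega) (by omega) (by omega) (by omega)]
    module
  have hRS3 : R (S (e 3)) = η • S (e 1) := by
    rw [hS3, map_add, map_smul, curvEnd_apply, hR3, smul_zero, zero_add, hR4]
  refine ⟨fun p hp => ?_, fun p => ?_⟩
  · obtain ⟨q, rfl⟩ := Nat.exists_eq_add_of_le' hp
    rw [hform, pow_succ R, Module.End.mul_apply, curvEnd_apply, hR3, map_zero, map_zero, mul_zero]
  · rw [hform, Odd.neg_one_pow ⟨p, rfl⟩, pow_succ R, Module.End.mul_apply, hR4, map_smul,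
      R.pow_two_mul_apply_of_swap hRS1 hRS3, hS1]
    simp only [smul_smul, map_add, map_smul, smul_eq_mul]
    ring

theorem stmt15
    {V : Type*} [AddCommGroup V] [Module ℝ V]
    (n : ℕ) (hn : 2 ≤ n) (e : ℕ → V)
    (hbasis : ∃ b : Module.Basis (Fin (2 * n)) ℝ V, ∀ i : Fin (2 * n), b i = e (i.1 + 1))
    (h ω : V →ₗ[ℝ] V →ₗ[ℝ] ℝ)
    (hsymm : ∀ X Y, h X Y = h Y X)
    (halt : ∀ X, ω X X = 0)
    (S : V →ₗ[ℝ] V)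
    (α β ε η : ℝ) (hε : ε = 1 ∨ ε = -1) (hη : η = 1 ∨ η = -1)
    (hS1 : S (e 1) = α • e 1 + e 2)
    (hS2 : S (e 2) = α • e 2)
    (hS3 : S (e 3) = β • e 3 + e 4)
    (hS4 : S (e 4) = β • e 4)
    (hh12 : h (e 1) (e 2) = ε) (hh21 : h (e 2) (e 1) = ε)
    (hh34 : h (e 3) (e 4) = η) (hh43 : h (e 4) (e 3) = η)
    (hh0 : ∀ i j, 1 ≤ i → i ≤ 2 * n → 1 ≤ j → j ≤ 2 * n → min i j ≤ 4 →
      ¬((i = 1 ∧ j = 2) ∨ (i = 2 ∧ j = 1) ∨ (i = 3 ∧ j = 4) ∨ (i = 4 ∧ j = 3)) →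
      h (e i) (e j) = 0)
    (i : ℕ) (hi1 : 1 ≤ i) (hi : i ≤ 2 * n) (hi2 : i ≠ 2) (hi4 : i ≠ 4) :
    (∀ p : ℕ, 1 ≤ p →
      Rpow h S ω p (pairList (e 1) (e 3) p ++ [e i, e 3]) = 0) ∧
    (∀ p : ℕ,
      Rpow h S ω (2 * p + 1) (pairList (e 1) (e 3) (2 * p + 1) ++ [e i, e 4]) =
        (-1) ^ (p + 1) * η ^ (p + 1) * ε ^ p * (α * ω (e i) (e 1) + ω (e i) (e 2))) :=
  stmt15_general n hn e h ω S α β ε η hS1 hS3 hh12 hh34 hh0 i hi1 hi hi2 hi4
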